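/- arXiv:2501.00389 — 2 statements merged into one kernel-verified Lean document; each statement's English description precedes it below -/
import Mathlib

section
/- Let W : ℝ → ℝ be C² with W ≥ 0, and ϕ the optimal profile with ϕ' = √(2W(ϕ)) > 0, ϕ'' = W'(ϕ). For any ψ ∈ C_c^∞(ℝ): ∫_ℝ ( (ψ')² + W''(ϕ)·ψ² ) dx = ∫_ℝ ( ψ' − ψ·(ϕ''/ϕ') )² dx ≥ 0. -/
open MeasureTheory Set

theorem stmt_5 (W φ : ℝ → ℝ) (hW : ContDiff ℝ 2 W) (hWnn : ∀ u, 0 ≤ W u)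
    (hφ : ContDiff ℝ 3 φ)
    (hode1 : ∀ x, deriv φ x = Real.sqrt (2 * W (φ x)))
    (hpos : ∀ x, 0 < deriv φ x)
    (hode2 : ∀ x, deriv (deriv φ) x = deriv W (φ x))
    (ψ : ℝ → ℝ) (hψ : ContDiff ℝ (⊤ : ℕ∞) ψ) (hsupp : HasCompactSupport ψ) :
    (∫ x : ℝ, ((deriv ψ x) ^ 2 + deriv (deriv W) (φ x) * (ψ x) ^ 2)) =
      (∫ x : ℝ, (deriv ψ x - ψ x * (deriv (deriv φ) x / deriv φ x)) ^ 2) ∧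
    0 ≤ ∫ x : ℝ, ((deriv ψ x) ^ 2 + deriv (deriv W) (φ x) * (ψ x) ^ 2) := by
  set g := deriv φ with hg_def
  have hgne : ∀ x, g x ≠ 0 := fun x => (hpos x).ne'
  -- regularity facts
  have hφ2 : ContDiff ℝ 2 g := by
    have := (contDiff_succ_iff_deriv (n := 2)).mp (by exact_mod_cast hφ)
    exact this.2.2
  have hW1 : ContDiff ℝ 1 (deriv W) := by
    have := (contDiff_succ_iff_deriv (n := 1)).mp (by exact_mod_cast hW)
    exact this.2.2
  have hWd : Differentiable ℝ (deriv W) := hW1.differentiable one_ne_zero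
  have hφd : Differentiable ℝ φ := hφ.differentiable (by norm_num)
  have hgd : Differentiable ℝ g := hφ2.differentiable (by norm_num)
  have hψd : Differentiable ℝ ψ := hψ.differentiable (by simp)
  -- deriv g = deriv W ∘ φ
  have hdg : deriv g = fun x => deriv W (φ x) := funext hode2
  have hdg1 : ContDiff ℝ 1 (deriv g) := by
    rw [hdg]; exact hW1.comp (hφ.of_le (by norm_num))
  -- derivative of deriv g
  have hddg : ∀ x, HasDerivAt (deriv g) (deriv (deriv W) (φ x) * g x) x := by
    intro x
    have h1 : HasDerivAt (fun y => deriv W (φ y)) (deriv (deriv W) (φ x) * g x) x :=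
      (hWd (φ x)).hasDerivAt.comp x (hφd x).hasDerivAt
    rw [hdg]; exact h1
  -- h := deriv g / g
  set h : ℝ → ℝ := fun x => deriv g x / g x with hh_def
  have hh1 : ContDiff ℝ 1 h := hdg1.div (hφ2.of_le one_le_two) hgne
  have hhd : ∀ x, HasDerivAt h
      ((deriv (deriv W) (φ x) * g x * g x - deriv g x * deriv g x) / (g x) ^ 2) x := by
    intro x
    exact (hddg x).div (hgd x).hasDerivAt (hgne x)
  -- F := ψ^2 * h
  set F : ℝ → ℝ := fun x => ψ x ^ 2 * h x with hF_def
  have hF1 : ContDiff ℝ 1 F := ((hψ.of_le (by simp)).pow 2).mul hh1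
  have hFd : ∀ x, HasDerivAt F
      (2 * ψ x * deriv ψ x * h x + ψ x ^ 2 *
        ((deriv (deriv W) (φ x) * g x * g x - deriv g x * deriv g x) / (g x) ^ 2)) x := by
    intro x
    have h1 := ((hψd x).hasDerivAt).fun_pow 2
    have : HasDerivAt (fun y => ψ y ^ 2 * h y) _ x := h1.mul (hhd x)
    convert this using 1
    ring
  -- pointwise identity
  have hpt : ∀ x, deriv ψ x ^ 2 + deriv (deriv W) (φ x) * ψ x ^ 2 =
      (deriv ψ x - ψ x * h x) ^ 2 + deriv F x := by
    intro x
    rw [(hFd x).deriv]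
    have hne := hgne x
    simp only [hh_def]
    field_simp [hh_def]
    ring
  -- compact supports
  have hsupp' : HasCompactSupport (deriv ψ) := hsupp.deriv
  have hψ0 : ∀ x ∉ tsupport ψ, ψ x = 0 := fun x hx => image_eq_zero_of_notMem_tsupport hx
  have hψ'0 : ∀ x ∉ tsupport ψ, deriv ψ x = 0 := by
    intro x hx
    by_contra hc
    exact hx (support_deriv_subset (by simpa using hc))
  have hAsupp : HasCompactSupport (fun x => (deriv ψ x - ψ x * h x) ^ 2) := by
    apply HasCompactSupport.intro hsupp
    intro x hx
    simp [hψ0 x hx, hψ'0 x hx]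
  have hFsupp : HasCompactSupport F := by
    apply HasCompactSupport.intro hsupp
    intro x hx
    simp [hF_def, hψ0 x hx]
  have hAcont : Continuous (fun x => (deriv ψ x - ψ x * h x) ^ 2) := by
    have : Continuous (deriv ψ) := (contDiff_infty_iff_deriv.mp (hψ.of_le (by simp))).2.continuous
    exact ((this.sub (hψ.continuous.mul hh1.continuous)).pow 2)
  have hAint : Integrable (fun x => (deriv ψ x - ψ x * h x) ^ 2) :=
    hAcont.integrable_of_hasCompactSupport hAsupp
  have hdFcont : Continuous (deriv F) := (contDiff_one_iff_deriv.mp hF1).2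
  have hdFint : Integrable (deriv F) :=
    hdFcont.integrable_of_hasCompactSupport hFsupp.deriv
  -- integral of deriv F is zero
  have hdF0 : (∫ x : ℝ, deriv F x) = 0 := by
    rw [← intervalIntegral.integral_Iic_add_Ioi (b := (0:ℝ)) hdFint.integrableOn hdFint.integrableOn,
      hFsupp.integral_Iic_deriv_eq hF1, hFsupp.integral_Ioi_deriv_eq hF1]
    ring
  have key : (∫ x : ℝ, ((deriv ψ x) ^ 2 + deriv (deriv W) (φ x) * (ψ x) ^ 2)) =
      ∫ x : ℝ, (deriv ψ x - ψ x * h x) ^ 2 := by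
    calc (∫ x : ℝ, ((deriv ψ x) ^ 2 + deriv (deriv W) (φ x) * (ψ x) ^ 2))
        = ∫ x : ℝ, ((deriv ψ x - ψ x * h x) ^ 2 + deriv F x) := by
          congr 1; funext x; exact hpt x
      _ = (∫ x : ℝ, (deriv ψ x - ψ x * h x) ^ 2) + ∫ x : ℝ, deriv F x :=
          integral_add hAint hdFint
      _ = ∫ x : ℝ, (deriv ψ x - ψ x * h x) ^ 2 := by rw [hdF0]; ring
  constructor
  · exact key
  · rw [key]
    exact integral_nonneg fun x => sq_nonneg _
end

section
/- Let H be a real Hilbert space, F : H → ℝ convex with subdifferential ∂F, G : H → ℝ concave and Gateaux differentiable with gradient ∇G. Fix τ, η > 0 with η ≥ τ²/2 and ρ ∈ (0,1]. Suppose x_{n+1}, v_{n+1} satisfy: g_n ∈ ∂F(x_{n+1}) + ∇G(x_n) with x_{n+1} = x_n + τ·v_n − η·g_n, and v_{n+1} = ρ·(v_n − τ·g_n). Then the total energy e_n := F(x_n) + G(x_n) + (1/(2ρ²))·‖v_n‖² satisfies e_{n+1} ≤ e_n − (1/2)(ρ^{−2} − 1)·‖v_n‖² + (τ²/2 − η)·‖g_n‖²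 ≤ e_n. -/
open scoped RealInnerProductSpace

theorem stmt_6 {H : Type*} [NormedAddCommGroup H] [InnerProductSpace ℝ H]
    [CompleteSpace H]
    (F G : H → ℝ) (gradG : H → H)
    (hF : ConvexOn ℝ Set.univ F)
    (hG : ∀ x y : H, G y ≤ G x + ⟪gradG x, y - x⟫)
    (τ η ρ : ℝ) (hτ : 0 < τ) (hη : 0 < η) (hη2 : τ ^ 2 / 2 ≤ η)
    (hρ0 : 0 < ρ) (hρ1 : ρ ≤ 1)
    (x v x' v' g s : H)
    (hs : ∀ y : H, F x' + ⟪s, y - x'⟫ ≤ F y)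
    (hg : g = s + gradG x)
    (hx' : x' = x + τ • v - η • g)
    (hv' : v' = ρ • (v - τ • g)) :
    F x' + G x' + (1 / (2 * ρ ^ 2)) * ‖v'‖ ^ 2 ≤
        F x + G x + (1 / (2 * ρ ^ 2)) * ‖v‖ ^ 2
          - (1 / 2) * (ρ⁻¹ ^ 2 - 1) * ‖v‖ ^ 2 + (τ ^ 2 / 2 - η) * ‖g‖ ^ 2 ∧
      F x + G x + (1 / (2 * ρ ^ 2)) * ‖v‖ ^ 2
          - (1 / 2) * (ρ⁻¹ ^ 2 - 1) * ‖v‖ ^ 2 + (τ ^ 2 / 2 - η) * ‖g‖ ^ 2 ≤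
        F x + G x + (1 / (2 * ρ ^ 2)) * ‖v‖ ^ 2 := by

  have hρ2 : (0:ℝ) < ρ ^ 2 := by positivity
  have hd : x' - x = τ • v - η • g := by rw [hx']; abel
  have hF1 : F x' ≤ F x + ⟪s, x' - x⟫ := by
    have := hs x
    have hneg : ⟪s, x - x'⟫ = -⟪s, x' - x⟫ := by
      rw [show x - x' = -(x' - x) by abel, inner_neg_right]
    linarith [this, hneg.le, hneg.ge]
  have hG1 : G x' ≤ G x + ⟪gradG x, x' - x⟫ := hG x x'
  have hinner : ⟪s, x' - x⟫ + ⟪gradG x, x' - x⟫ = τ * ⟪g, v⟫ - η * ‖g‖ ^ 2 := by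
    rw [← inner_add_left, ← hg, hd, inner_sub_right, real_inner_smul_right,
      real_inner_smul_right, real_inner_self_eq_norm_sq]
  have hkin : (1 / (2 * ρ ^ 2)) * ‖v'‖ ^ 2
      = (1/2) * ‖v‖ ^ 2 - τ * ⟪g, v⟫ + (τ ^ 2 / 2) * ‖g‖ ^ 2 := by
    have h1 : ‖v'‖ ^ 2 = ρ ^ 2 * ‖v - τ • g‖ ^ 2 := by
      rw [hv', norm_smul, Real.norm_eq_abs, abs_of_pos hρ0, mul_pow]
    have h2 : ‖v - τ • g‖ ^ 2 = ‖v‖ ^ 2 - 2 * (τ * ⟪g, v⟫) + τ ^ 2 * ‖g‖ ^ 2 := by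
      rw [norm_sub_sq_real, real_inner_smul_right, norm_smul, Real.norm_eq_abs,
        abs_of_pos hτ, mul_pow, real_inner_comm]
    rw [h1, h2]
    field_simp
  have hcoef : (1 / (2 * ρ ^ 2)) - (1 / 2) * (ρ⁻¹ ^ 2 - 1) = 1 / 2 := by
    field_simp; ring
  constructor
  · have : F x' + G x' + (1 / (2 * ρ ^ 2)) * ‖v'‖ ^ 2
        ≤ F x + G x + (1/2) * ‖v‖ ^ 2 + (τ ^ 2 / 2 - η) * ‖g‖ ^ 2 := by
      rw [hkin]; linarith
    nlinarith [this, hcoef, sq_nonneg ‖v‖]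
  · have hρi : 1 ≤ ρ⁻¹ := by
      rw [le_inv_comm₀ one_pos hρ0]; simpa using hρ1
    have hρinv : 1 ≤ ρ⁻¹ ^ 2 := by nlinarith
    nlinarith [sq_nonneg ‖v‖, sq_nonneg ‖g‖]
end
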